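/- arXiv:1907.05969 — 8 statements merged into one kernel-verified Lean document; each statement's English description precedes it below -/
import Mathlib

section
/- Let C be a finitely aligned left cancellative small category, G a discrete group, and η : C → G a cocycle. Then the skew product C ×_η G is finitely aligned. -/
universe u v w

/-- A small category encoded on its set of morphisms: objects are identified with
identity morphisms, `src`/`rng` are the source and range maps, and `mul` is the
(total extension of the) partially defined composition, whose axioms below are
only required when `src a = rng b`. -/
structure CatData (C : Type u) where
  src : C → C
  rng : C → C
  mul : C → C → C

namespace CatData

variable {C : Type u} (S : CatData C)

/-- Vertices (objects = identity morphisms). -/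
def IsVertex (v : C) : Prop := S.src v = v

/-- The axioms of a small category. -/
structure IsCat : Prop where
  src_src : ∀ a, S.src (S.src a) = S.src a
  rng_src : ∀ a, S.rng (S.src a) = S.src a
  src_rng : ∀ a, S.src (S.rng a) = S.rng a
  rng_rng : ∀ a, S.rng (S.rng a) = S.rng a
  rng_mul : ∀ a b, S.src a = S.rng b → S.rng (S.mul a b) = S.rng a
  src_mul : ∀ a b, S.src a = S.rng b → S.src (S.mul a b) = S.src b
  mul_assoc' : ∀ a b c, S.src a = S.rng b → S.src b = S.rng c →
      S.mul (S.mul a b) c = S.mul a (S.mul b c)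
  id_mul : ∀ a, S.mul (S.rng a) a = a
  mul_id : ∀ a, S.mul a (S.src a) = a

/-- Left cancellativity (on composable pairs). -/
def LeftCancellative : Prop :=
  ∀ a b c, S.src a = S.rng b → S.src a = S.rng c → S.mul a b = S.mul a c → b = c

/-- The principal right ideal `aC`. -/
def rIdeal (a : C) : Set C := {x | ∃ b, S.src a = S.rng b ∧ x = S.mul a b}

/-- Finite alignment. -/
def FinitelyAligned : Prop :=
  ∀ a b : C, ∃ F : Finset C, S.rIdeal a ∩ S.rIdeal b = ⋃ γ ∈ F, S.rIdeal γ

/-- A subset `F` is independent if `a ∈ bC` for `a, b ∈ F` implies `a = b`. -/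
def Independent (F : Set C) : Prop :=
  ∀ a ∈ F, ∀ b ∈ F, a ∈ S.rIdeal b → a = b

/-- `F` is exhaustive at the vertex `v`: every `a ∈ vC` has
`aC ∩ bC ≠ ∅` for some `b ∈ F`. -/
def Exhaustive (v : C) (F : Set C) : Prop :=
  ∀ a, S.rng a = v → ∃ b ∈ F, (S.rIdeal a ∩ S.rIdeal b).Nonempty

/-- A group-valued cocycle (functor into a group). -/
def IsCocycle {G : Type v} [Group G] (η : C → G) : Prop :=
  ∀ a b, S.src a = S.rng b → η (S.mul a b) = η a * η b

end CatData

/-- The skew product `C ×_η G`: source `(s α, g)`, range `(r α, η(α)g)`, product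
`(α,g)(β,h) = (αβ, h)` (defined when `s α = r β` and `g = η(β)h`). -/
def skewProduct {C : Type u} {G : Type v} [Group G] (S : CatData C) (η : C → G) :
    CatData (C × G) where
  src p := (S.src p.1, p.2)
  rng p := (S.rng p.1, η p.1 * p.2)
  mul p q := (S.mul p.1 q.1, q.2)

/-- An action of a group `G` on a small category by category automorphisms. -/
def IsCatAction {C : Type u} (S : CatData C) {G : Type v} [Group G] (act : G → C → C) : Prop :=
  (∀ a, act 1 a = a) ∧
  (∀ g h a, act g (act h a) = act (g * h) a) ∧
  (∀ g a, S.src (act g a) = act g (S.src a)) ∧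
  (∀ g a, S.rng (act g a) = act g (S.rng a)) ∧
  (∀ g a b, S.src a = S.rng b → S.mul (act g a) (act g b) = act g (S.mul a b))

/-- Freeness of an action. -/
def FreeAction {C : Type u} {G : Type v} [Group G] (act : G → C → C) : Prop :=
  ∀ g a, act g a = a → g = 1

/-- The orbit relation of an action; `Quot (orbRel act)` is the orbit space. -/
def orbRel {C : Type u} {G : Type v} [Group G] (act : G → C → C) : C → C → Prop :=
  fun a b => ∃ g : G, act g a = b

/-- A functor between small categories (in the `CatData` encoding). -/
def IsFunctor {C : Type u} {D : Type v} (S : CatData C) (T : CatData D) (f : C → D) : Prop :=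
  (∀ a, T.src (f a) = f (S.src a)) ∧ (∀ a, T.rng (f a) = f (S.rng a)) ∧
  (∀ a b, S.src a = S.rng b → f (S.mul a b) = T.mul (f a) (f b))

/-- A groupoid: a small category in which every morphism is invertible. -/
def IsGroupoid {C : Type u} (S : CatData C) : Prop :=
  S.IsCat ∧ ∀ a, ∃ b, S.src b = S.rng a ∧ S.rng b = S.src a ∧
    S.mul a b = S.rng a ∧ S.mul b a = S.src a

/-- Connectedness of a small category: the equivalence relation generated by
`{(v,w) : vCw ≠ ∅}` is all of `C⁰ × C⁰`. -/
def ConnectedCat {C : Type u} (S : CatData C) : Prop :=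
  ∀ v w, S.IsVertex v → S.IsVertex w →
    Relation.EqvGen (fun p q => ∃ a, S.src a = q ∧ S.rng a = p) v w

/-- A maximal tree rooted at `x` in a groupoid, given together with the inverses
of its members: `t y ∈ yGx` with `t x = x`. -/
def IsMaxTree {C : Type u} (S : CatData C) (x : C) (t tinv : C → C) : Prop :=
  t x = x ∧ tinv x = x ∧
  ∀ y, S.IsVertex y →
    S.src (t y) = x ∧ S.rng (t y) = y ∧
    S.src (tinv y) = y ∧ S.rng (tinv y) = x ∧
    S.mul (tinv y) (t y) = x ∧ S.mul (t y) (tinv y) = y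

/-- A retraction of a groupoid onto its isotropy group at `x`: a functor into
`G_x` restricting to the identity on `G_x`. -/
def IsRetraction {C : Type u} (S : CatData C) (x : C) (η : C → C) : Prop :=
  (∀ a, S.src (η a) = x ∧ S.rng (η a) = x) ∧
  (∀ vv, S.IsVertex vv → η vv = x) ∧
  (∀ a b, S.src a = S.rng b → η (S.mul a b) = S.mul (η a) (η b)) ∧
  (∀ a, S.src a = x → S.rng a = x → η a = a)

/-- A fundamental groupoid of a small category: a groupoid `T` with a functor
`i`, bijective on vertices, through which every functor into a groupoid factors
uniquely. -/
def IsFundamentalGroupoid {C : Type u} {D : Type v} (S : CatData C) (T : CatData D)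
    (i : C → D) : Prop :=
  IsGroupoid T ∧ IsFunctor S T i ∧
  (∀ v, S.IsVertex v → T.IsVertex (i v)) ∧
  (∀ v w', S.IsVertex v → S.IsVertex w' → i v = i w' → v = w') ∧
  (∀ p, T.IsVertex p → ∃ v, S.IsVertex v ∧ i v = p) ∧
  ∀ (E : Type w) (TE : CatData E), IsGroupoid TE → ∀ f : C → E, IsFunctor S TE f →
    ∃! f' : D → E, IsFunctor T TE f' ∧ ∀ a, f a = f' (i a)

/-- `(U, j)` is a universal group of the small category `S`: `j` is a cocycle and
every group-valued cocycle factors uniquely through `j` via a group homomorphism. -/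
def IsUniversalGroup {C : Type u} (S : CatData C) (U : Type v) [Group U] (j : C → U) : Prop :=
  S.IsCocycle j ∧
  ∀ (H : Type w) (instH : Group H) (ψ : C → H), S.IsCocycle ψ →
    ∃! ψ' : U →* H, ∀ a, ψ a = ψ' (j a)

/-- A cocycle on the part of a small category lying in the set `P`. -/
def IsCocycleOn {C : Type u} (S : CatData C) (P : C → Prop) {H : Type v} [Group H]
    (ψ : C → H) : Prop :=
  ∀ a b, P a → P b → S.src a = S.rng b → ψ (S.mul a b) = ψ a * ψ b

/-- `(U, j)` is a universal group of the restriction of `S` to the set `P`. -/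
def IsUniversalGroupOn {C : Type u} (S : CatData C) (P : C → Prop) (U : Type v) [Group U]
    (j : C → U) : Prop :=
  IsCocycleOn S P j ∧
  ∀ (H : Type w) (instH : Group H) (ψ : C → H), IsCocycleOn S P ψ →
    ∃! ψ' : U →* H, ∀ a, P a → ψ a = ψ' (j a)

/-- The generator `z̄` of the free product `𝔽(C⁰ \ {x}) ∗ H`: the free generator
corresponding to the vertex `z` when `z ≠ x`, and the identity when `z = x`. -/
noncomputable def vbar {C : Type u} (S : CatData C) (x : C) (H : Type v) [Group H] (z : C) :
    Monoid.Coprod (FreeGroup {y : C // S.IsVertex y ∧ y ≠ x}) H :=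
  haveI := Classical.dec (S.IsVertex z ∧ z ≠ x)
  if hz : S.IsVertex z ∧ z ≠ x then
    Monoid.Coprod.inl (FreeGroup.of (⟨z, hz⟩ : {y : C // S.IsVertex y ∧ y ≠ x}))
  else 1

section SkewAux

variable {C : Type u} {G : Type v} [Group G]

lemma eta_src_eq_one (S : CatData C) (hC : S.IsCat) {η : C → G} (hη : S.IsCocycle η)
    (a : C) : η (S.src a) = 1 := by
  have h1 : S.mul (S.src a) (S.src a) = S.src a := by
    have := hC.mul_id (S.src a); rwa [hC.src_src] at this
  have h2 := hη (S.src a) (S.src a) (by rw [hC.src_src, hC.rng_src])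
  rw [h1] at h2
  exact (left_eq_mul.mp h2)

lemma eta_rng_eq_one (S : CatData C) (hC : S.IsCat) {η : C → G} (hη : S.IsCocycle η)
    (a : C) : η (S.rng a) = 1 := by
  have h1 : S.mul (S.rng a) (S.rng a) = S.rng a := by
    have := hC.id_mul (S.rng a); rwa [hC.rng_rng] at this
  have h2 := hη (S.rng a) (S.rng a) (by rw [hC.src_rng, hC.rng_rng])
  rw [h1] at h2
  exact (left_eq_mul.mp h2)

lemma skew_isCat (S : CatData C) (hC : S.IsCat) (η : C → G) (hη : S.IsCocycle η) :
    (skewProduct S η).IsCat := by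
  refine ⟨?_, ?_, ?_, ?_, ?_, ?_, ?_, ?_, ?_⟩
  · intro p; simp [skewProduct, hC.src_src]
  · intro p; simp [skewProduct, hC.rng_src, eta_src_eq_one S hC hη]
  · intro p; simp [skewProduct, hC.src_rng]
  · intro p; simp [skewProduct, hC.rng_rng, eta_rng_eq_one S hC hη]
  · intro p q hpq
    rw [Prod.ext_iff] at hpq
    obtain ⟨h1, h2⟩ := hpq
    simp only [skewProduct, Prod.ext_iff] at *
    exact ⟨hC.rng_mul _ _ h1, by rw [hη _ _ h1, mul_assoc, ← h2]⟩
  · intro p q hpq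
    rw [Prod.ext_iff] at hpq
    simp only [skewProduct, Prod.ext_iff] at *
    exact ⟨hC.src_mul _ _ hpq.1, trivial⟩
  · intro p q r h1 h2
    rw [Prod.ext_iff] at h1 h2
    simp only [skewProduct, Prod.ext_iff] at *
    exact ⟨hC.mul_assoc' _ _ _ h1.1 h2.1, trivial⟩
  · intro p; simp [skewProduct, hC.id_mul]
  · intro p; simp [skewProduct, hC.mul_id]

lemma mem_skew_rIdeal (S : CatData C) (η : C → G) {a x : C} {g k : G} :
    (x, k) ∈ (skewProduct S η).rIdeal (a, g) ↔
      ∃ c, S.src a = S.rng c ∧ x = S.mul a c ∧ g = η c * k := by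
  constructor
  · rintro ⟨⟨c, k'⟩, h1, h2⟩
    rw [Prod.ext_iff] at h1 h2
    simp only [skewProduct] at h1 h2
    exact ⟨c, h1.1, h2.1, by rw [h1.2, h2.2]⟩
  · rintro ⟨c, h1, h2, h3⟩
    exact ⟨(c, k), by simp only [skewProduct, Prod.ext_iff]; exact ⟨h1, h3⟩,
      by simp only [skewProduct, Prod.ext_iff]; exact ⟨h2, trivial⟩⟩

lemma mem_rIdeal_self {D : Type w} (S : CatData D) (hC : S.IsCat) (a : D) :
    a ∈ S.rIdeal a :=
  ⟨S.src a, (hC.rng_src a).symm, (hC.mul_id a).symm⟩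

lemma rIdeal_trans {D : Type w} (S : CatData D) (hC : S.IsCat) {p r : D}
    (hp : p ∈ S.rIdeal r) : S.rIdeal p ⊆ S.rIdeal r := by
  obtain ⟨c, hc1, rfl⟩ := hp
  rintro x ⟨d, hd1, rfl⟩
  have hcd : S.src c = S.rng d := by rwa [hC.src_mul _ _ hc1] at hd1
  exact ⟨S.mul c d, by rw [hC.rng_mul _ _ hcd]; exact hc1, hC.mul_assoc' _ _ _ hc1 hcd⟩

end SkewAux

/-- the skew product of a finitely aligned LCSC is finitely aligned. -/
theorem skewProduct_finitelyAligned {C : Type u} {G : Type v} [Group G] (S : CatData C)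
    (hC : S.IsCat) (hLC : S.LeftCancellative) (hFA : S.FinitelyAligned)
    (η : C → G) (hη : S.IsCocycle η) :
    (skewProduct S η).FinitelyAligned := by
  classical
  have hSk : (skewProduct S η).IsCat := skew_isCat S hC η hη
  rintro ⟨a, g⟩ ⟨b, h⟩
  obtain ⟨F, hF⟩ := hFA a b
  set T : Set (C × G) :=
    {p | p.1 ∈ F ∧ p ∈ (skewProduct S η).rIdeal (a, g) ∩ (skewProduct S η).rIdeal (b, h)}
    with hT
  have hinj : Set.InjOn Prod.fst T := by
    rintro ⟨γ, k⟩ ⟨hγF, hpa, hpb⟩ ⟨γ', k'⟩ ⟨hγF', hpa', hpb'⟩ (hfst : γ = γ')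
    subst hfst
    obtain ⟨c, hc1, hc2, hc3⟩ := (mem_skew_rIdeal S η).mp hpa
    obtain ⟨c', hc1', hc2', hc3'⟩ := (mem_skew_rIdeal S η).mp hpa'
    have hcc : c = c' := hLC a c c' hc1 hc1' (hc2 ▸ hc2' ▸ rfl)
    subst hcc
    have : k = k' := mul_left_cancel (hc3.symm.trans hc3')
    rw [this]
  have hTfin : T.Finite :=
    Set.Finite.of_finite_image
      ((F.finite_toSet).subset (by rintro x ⟨p, hp, rfl⟩; exact hp.1)) hinj
  refine ⟨hTfin.toFinset, ?_⟩
  ext ⟨x, k⟩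
  constructor
  · rintro ⟨hxa, hxb⟩
    obtain ⟨c, hc1, hc2, hc3⟩ := (mem_skew_rIdeal S η).mp hxa
    obtain ⟨d, hd1, hd2, hd3⟩ := (mem_skew_rIdeal S η).mp hxb
    have hxab : x ∈ S.rIdeal a ∩ S.rIdeal b := ⟨⟨c, hc1, hc2⟩, ⟨d, hd1, hd2⟩⟩
    rw [hF] at hxab
    obtain ⟨γ, hγF, e, he1, he2⟩ : ∃ γ ∈ F, x ∈ S.rIdeal γ := by
      simpa using hxab
    have hγab : γ ∈ S.rIdeal a ∩ S.rIdeal b := by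
      rw [hF]
      exact Set.mem_iUnion₂.mpr ⟨γ, hγF, mem_rIdeal_self S hC γ⟩
    obtain ⟨⟨cγ, hcγ1, hcγ2⟩, ⟨dγ, hdγ1, hdγ2⟩⟩ := hγab
    have hce : S.src cγ = S.rng e := by
      have h' : S.src γ = S.rng e := he1
      rwa [hcγ2, hC.src_mul _ _ hcγ1] at h'
    have hde : S.src dγ = S.rng e := by
      have h' : S.src γ = S.rng e := he1
      rwa [hdγ2, hC.src_mul _ _ hdγ1] at h'
    have hc : c = S.mul cγ e :=
      hLC a c (S.mul cγ e) hc1 (by rw [hC.rng_mul _ _ hce]; exact hcγ1)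
        (by rw [← hc2, ← hC.mul_assoc' _ _ _ hcγ1 hce, ← hcγ2, he2])
    have hd : d = S.mul dγ e :=
      hLC b d (S.mul dγ e) hd1 (by rw [hC.rng_mul _ _ hde]; exact hdγ1)
        (by rw [← hd2, ← hC.mul_assoc' _ _ _ hdγ1 hde, ← hdγ2, he2])
    have hgc : g = η cγ * (η e * k) := by rw [hc3, hc, hη _ _ hce, mul_assoc]
    have hhd : h = η dγ * (η e * k) := by rw [hd3, hd, hη _ _ hde, mul_assoc]
    have hpT : (γ, η e * k) ∈ hTfin.toFinset := by
      rw [Set.Finite.mem_toFinset]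
      exact ⟨hγF, (mem_skew_rIdeal S η).mpr ⟨cγ, hcγ1, hcγ2, hgc⟩,
        (mem_skew_rIdeal S η).mpr ⟨dγ, hdγ1, hdγ2, hhd⟩⟩
    exact Set.mem_iUnion₂.mpr ⟨(γ, η e * k), hpT,
      (mem_skew_rIdeal S η).mpr ⟨e, he1, he2, rfl⟩⟩
  · intro hx
    obtain ⟨p, hpF, hxp⟩ := Set.mem_iUnion₂.mp hx
    rw [Set.Finite.mem_toFinset] at hpF
    exact ⟨rIdeal_trans _ hSk hpF.2.1 hxp, rIdeal_trans _ hSk hpF.2.2 hxp⟩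
end

section
/- Let C be a left cancellative small category, G a group, η : C → G a cocycle, and let D = C ×_η G be the skew product. Suppose (α,g), (β,h) ∈ D satisfy η(α)g = η(β)h, and let F ⊆ C be a finite independent set with αC ∩ βC = FC. Then the set F' = {(δ, η(δ)⁻¹η(α)g) : δ ∈ F} is independent in D and (α,g)D ∩ (β,h)D = ∪_{δ∈F} (δ, η(δ)⁻¹η(α)g)D. -/
universe u v w

lemma mem_rIdeal_skew {C : Type u} {G : Type v} [Group G] (S : CatData C)
    (η : C → G) (hη : S.IsCocycle η) (α : C) (g : G) (p : C × G) :
    p ∈ (skewProduct S η).rIdeal (α, g) ↔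
      p.1 ∈ S.rIdeal α ∧ p.2 = (η p.1)⁻¹ * (η α * g) := by
  constructor
  · rintro ⟨b, hb, hp⟩
    simp only [skewProduct, Prod.ext_iff] at hb hp
    obtain ⟨hb1, hb2⟩ := hb
    refine ⟨⟨b.1, hb1, hp.1⟩, ?_⟩
    rw [hp.2, hp.1, hη α b.1 hb1, hb2]
    group
  · rintro ⟨⟨b, hb, hx⟩, hm⟩
    refine ⟨(b, (η b)⁻¹ * g), ?_, ?_⟩
    · simp only [skewProduct, Prod.ext_iff]
      exact ⟨hb, by group⟩
    · simp only [skewProduct, Prod.ext_iff]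
      refine ⟨hx, ?_⟩
      rw [hm, hx, hη α b hb]
      group

/-- if `αC ∩ βC = FC` with `F` finite independent and `η(α)g = η(β)h`,
then `F' = {(δ, η(δ)⁻¹η(α)g) : δ ∈ F}` is independent and
`(α,g)D ∩ (β,h)D = ∪_{δ∈F} (δ, η(δ)⁻¹η(α)g)D`. -/
theorem skewProduct_join {C : Type u} {G : Type v} [Group G] (S : CatData C)
    (hC : S.IsCat) (hLC : S.LeftCancellative) (η : C → G) (hη : S.IsCocycle η)
    (α β : C) (g h : G) (hgh : η α * g = η β * h)
    (F : Finset C) (hFind : S.Independent (↑F : Set C))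
    (hF : S.rIdeal α ∩ S.rIdeal β = ⋃ δ ∈ F, S.rIdeal δ) :
    (skewProduct S η).Independent
      ((fun δ => (δ, (η δ)⁻¹ * (η α * g))) '' (↑F : Set C)) ∧
    (skewProduct S η).rIdeal (α, g) ∩ (skewProduct S η).rIdeal (β, h) =
      ⋃ δ ∈ F, (skewProduct S η).rIdeal (δ, (η δ)⁻¹ * (η α * g)) := by
  constructor
  · rintro p ⟨δ, hδ, rfl⟩ q ⟨δ', hδ', rfl⟩ hpq
    rw [mem_rIdeal_skew S η hη] at hpq
    simp only at hpq
    have : δ = δ' := hFind δ hδ δ' hδ' hpq.1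
    subst this; rfl
  · ext ⟨x, m⟩
    simp only [Set.mem_inter_iff, mem_rIdeal_skew S η hη, Set.mem_iUnion]
    constructor
    · rintro ⟨⟨hxα, hm⟩, ⟨hxβ, -⟩⟩
      have hx : x ∈ ⋃ δ ∈ F, S.rIdeal δ := by rw [← hF]; exact ⟨hxα, hxβ⟩
      simp only [Set.mem_iUnion] at hx
      obtain ⟨δ, hδ, hxδ⟩ := hx
      refine ⟨δ, hδ, hxδ, ?_⟩
      rw [hm]; group
    · rintro ⟨δ, hδ, hxδ, hm⟩
      have hx : x ∈ S.rIdeal α ∩ S.rIdeal β := by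
        rw [hF]; exact Set.mem_biUnion hδ hxδ
      refine ⟨⟨hx.1, ?_⟩, hx.2, ?_⟩
      · rw [hm]; group
      · rw [hm, ← hgh]; group
end

section
/- Let C be a left cancellative small category, G a group, η : C → G a cocycle, and D = C ×_η G the skew product. Fix v ∈ C⁰ and g ∈ G. A finite subset F' ⊆ (v,g)D is exhaustive at the vertex (v,g) ∈ D⁰ if and only if F' = {(α, η(α)⁻¹g) : α ∈ F} for some finite subset F ⊆ vC that is exhaustive at v. -/
universe u v w

/-- a finite `F' ⊆ (v,g)D` is exhaustive at `(v,g)` iff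
`F' = {(α, η(α)⁻¹g) : α ∈ F}` for some finite exhaustive `F ⊆ vC`. -/
theorem skewProduct_exhaustive {C : Type u} {G : Type v} [Group G] (S : CatData C)
    (hC : S.IsCat) (hLC : S.LeftCancellative) (η : C → G) (hη : S.IsCocycle η)
    (v : C) (hv : S.IsVertex v) (g : G)
    (F' : Finset (C × G)) (hF' : ∀ p ∈ F', (skewProduct S η).rng p = (v, g)) :
    (skewProduct S η).Exhaustive (v, g) (↑F' : Set (C × G)) ↔
      ∃ F : Finset C, (∀ a ∈ F, S.rng a = v) ∧ S.Exhaustive v (↑F : Set C) ∧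
        (↑F' : Set (C × G)) = (fun a => (a, (η a)⁻¹ * g)) '' (↑F : Set C) := by
  classical
  have hmem : ∀ p ∈ F', S.rng p.1 = v ∧ p.2 = (η p.1)⁻¹ * g := by
    intro p hp
    have := hF' p hp
    simp only [skewProduct, Prod.mk.injEq] at this
    exact ⟨this.1, by rw [eq_inv_mul_iff_mul_eq]; exact this.2⟩
  constructor
  · intro hex
    refine ⟨F'.image Prod.fst, ?_, ?_, ?_⟩
    · intro a ha
      obtain ⟨p, hp, rfl⟩ := Finset.mem_image.mp ha
      exact (hmem p hp).1
    · intro a ha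
      obtain ⟨q, hq, x, hx1, hx2⟩ := hex (a, (η a)⁻¹ * g)
        (by simp [skewProduct, ha])
      obtain ⟨w, hw1, hw2⟩ := hx1
      obtain ⟨w', hw1', hw2'⟩ := hx2
      simp only [skewProduct, Prod.mk.injEq, Prod.ext_iff] at hw1 hw2 hw1' hw2'
      exact ⟨q.1, Finset.mem_image.mpr ⟨q, hq, rfl⟩,
        x.1, ⟨w.1, hw1.1, hw2.1⟩, ⟨w'.1, hw1'.1, hw2'.1⟩⟩
    · ext p
      simp only [Finset.coe_image, Set.mem_image, Finset.mem_coe]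
      constructor
      · intro hp
        exact ⟨p.1, ⟨p, hp, rfl⟩, by
          obtain ⟨h1, h2⟩ := hmem p hp
          exact (Prod.ext rfl h2.symm)⟩
      · rintro ⟨a, ⟨q, hq, rfl⟩, rfl⟩
        have := (hmem q hq).2
        rwa [show (q.1, (η q.1)⁻¹ * g) = q from (Prod.ext rfl this.symm)]
  · rintro ⟨F, hFrng, hFex, hFeq⟩
    rintro ⟨a, h⟩ hp
    simp only [skewProduct, Prod.mk.injEq] at hp
    obtain ⟨ha, hh⟩ := hp
    have hh' : h = (η a)⁻¹ * g := by rw [eq_inv_mul_iff_mul_eq]; exact hh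
    obtain ⟨b, hbF, x, ⟨c, hc1, hc2⟩, ⟨d, hd1, hd2⟩⟩ := hFex a ha
    refine ⟨(b, (η b)⁻¹ * g), ?_, ((x, (η x)⁻¹ * g)), ?_, ?_⟩
    · rw [hFeq]; exact ⟨b, hbF, rfl⟩
    · refine ⟨(c, (η c)⁻¹ * h), ?_, ?_⟩
      · simp only [skewProduct, Prod.mk.injEq]
        exact ⟨hc1, by rw [mul_inv_cancel_left]⟩
      · simp only [skewProduct, Prod.mk.injEq]
        refine ⟨hc2, ?_⟩
        rw [hh', hc2, hη a c hc1, mul_inv_rev, mul_assoc]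
    · refine ⟨(d, (η d)⁻¹ * ((η b)⁻¹ * g)), ?_, ?_⟩
      · simp only [skewProduct, Prod.mk.injEq]
        exact ⟨hd1, by rw [mul_inv_cancel_left]⟩
      · simp only [skewProduct, Prod.mk.injEq]
        refine ⟨hd2, ?_⟩
        rw [hd2, hη b d hd1, mul_inv_rev, mul_assoc]
end

section
/- Let D be a small category and let G ↷ D be a free action of a group G by category automorphisms. Then the orbit space D/G, with vertex set {[v] : v ∈ D⁰}, range and source [λ] ↦ [r(λ)], [λ] ↦ [s(λ)], and product [λ][μ] = [λ(g·μ)] (where g ∈ G is the unique element with s(λ) = r(g·μ)), is a well-defined small category, and the quotient map q : D → D/G, q(λ) = [λ], is a functor. Moreover, if D is left cancellative, then D/G is left cancellative. -/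
universe u v w

section QCaux

variable {D : Type u} {G : Type v} [Group G] (S : CatData D) (act : G → D → D)

/-- Auxiliary: multiplication on representatives for the orbit category. -/
noncomputable def qcMulFn (l m : D) : Quot (orbRel act) :=
  haveI := Classical.dec (∃ g : G, S.src l = S.rng (act g m))
  if h : ∃ g : G, S.src l = S.rng (act g m) then
    Quot.mk _ (S.mul l (act h.choose m))
  else Quot.mk _ l

variable {S act}

theorem qcInv (hact : IsCatAction S act) {g : G} {a b : D} (h : act g a = b) :
    act g⁻¹ b = a := by
  rw [← h, hact.2.1, inv_mul_cancel, hact.1]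

theorem qcEquiv (hact : IsCatAction S act) : Equivalence (orbRel act) :=
  ⟨fun a => ⟨1, hact.1 a⟩,
   fun h => by obtain ⟨g, hg⟩ := h; exact ⟨g⁻¹, qcInv hact hg⟩,
   fun h h' => by
     obtain ⟨g, hg⟩ := h; obtain ⟨k, hk⟩ := h'
     exact ⟨k * g, by rw [← hact.2.1, hg, hk]⟩⟩

theorem qcExact (hact : IsCatAction S act) {a b : D}
    (h : Quot.mk (orbRel act) a = Quot.mk (orbRel act) b) : ∃ g : G, act g a = b :=
  ((qcEquiv hact).eqvGen_iff).mp (Quot.eq.mp h)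

theorem qcUniq (hact : IsCatAction S act) (hfree : FreeAction act)
    {l m : D} {g g' : G} (hg : S.src l = S.rng (act g m))
    (hg' : S.src l = S.rng (act g' m)) : g = g' := by
  have h2 : act (g'⁻¹ * g) (S.rng m) = S.rng m := by
    rw [← hact.2.1, ← hact.2.2.2.1, ← hg, hg', hact.2.2.2.1, hact.2.1,
      inv_mul_cancel, hact.1]
  exact (inv_mul_eq_one.mp (hfree _ _ h2)).symm

theorem qcMulFn_eq (hact : IsCatAction S act) (hfree : FreeAction act)
    {l m : D} {g : G} (hg : S.src l = S.rng (act g m)) :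
    qcMulFn S act l m = Quot.mk (orbRel act) (S.mul l (act g m)) := by
  have h : ∃ g : G, S.src l = S.rng (act g m) := ⟨g, hg⟩
  simp only [qcMulFn]
  rw [dif_pos h, qcUniq hact hfree h.choose_spec hg]

theorem qcEx_right (hact : IsCatAction S act) (l m : D) (k : G) :
    (∃ g : G, S.src l = S.rng (act g m)) ↔
      (∃ g : G, S.src l = S.rng (act g (act k m))) := by
  constructor
  · rintro ⟨g, hg⟩
    exact ⟨g * k⁻¹, by rw [hact.2.1, inv_mul_cancel_right]; exact hg⟩
  · rintro ⟨g, hg⟩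
    exact ⟨g * k, by rw [← hact.2.1]; exact hg⟩

theorem qcEx_left (hact : IsCatAction S act) (l m : D) (k : G) :
    (∃ g : G, S.src l = S.rng (act g m)) ↔
      (∃ g : G, S.src (act k l) = S.rng (act g m)) := by
  constructor
  · rintro ⟨g, hg⟩
    refine ⟨k * g, ?_⟩
    rw [hact.2.2.1, hg, hact.2.2.2.1, hact.2.2.2.1, hact.2.1]
  · rintro ⟨g, hg⟩
    refine ⟨k⁻¹ * g, ?_⟩
    rw [hact.2.2.1] at hg
    rw [hact.2.2.2.1, ← hact.2.1, ← hact.2.2.2.1]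
    exact (qcInv hact hg).symm

theorem qcMulFn_right (hact : IsCatAction S act) (hfree : FreeAction act)
    (l : D) {m m' : D} (k : G) (hk : act k m = m') :
    qcMulFn S act l m = qcMulFn S act l m' := by
  subst hk
  by_cases h : ∃ g : G, S.src l = S.rng (act g m)
  · obtain ⟨g, hg⟩ := h
    have hg' : S.src l = S.rng (act (g * k⁻¹) (act k m)) := by
      rw [hact.2.1, inv_mul_cancel_right]; exact hg
    rw [qcMulFn_eq hact hfree hg, qcMulFn_eq hact hfree hg', hact.2.1,
      inv_mul_cancel_right]
  · simp only [qcMulFn]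
    rw [dif_neg h, dif_neg (fun h' => h ((qcEx_right hact l m k).mpr h'))]

theorem qcMulFn_left (hact : IsCatAction S act) (hfree : FreeAction act)
    (l : D) (k : G) (m : D) :
    qcMulFn S act l m = qcMulFn S act (act k l) m := by
  by_cases h : ∃ g : G, S.src l = S.rng (act g m)
  · obtain ⟨g, hg⟩ := h
    have hg' : S.src (act k l) = S.rng (act (k * g) m) := by
      rw [hact.2.2.1, hg, hact.2.2.2.1, hact.2.2.2.1, hact.2.1]
    rw [qcMulFn_eq hact hfree hg, qcMulFn_eq hact hfree hg']
    refine Quot.sound ⟨k, ?_⟩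
    rw [← hact.2.2.2.2 k l (act g m) hg, hact.2.1]
  · simp only [qcMulFn]
    rw [dif_neg h, dif_neg (fun h' => h ((qcEx_left hact l m k).mpr h'))]
    exact Quot.sound ⟨k, rfl⟩

/-- The orbit category of a free action. -/
noncomputable def qcT (hact : IsCatAction S act) (hfree : FreeAction act) :
    CatData (Quot (orbRel act)) where
  src := Quot.lift (fun l => Quot.mk _ (S.src l))
    (fun a _ h => by
      obtain ⟨g, hg⟩ := h
      exact Quot.sound ⟨g, by rw [← hg]; exact (hact.2.2.1 g a).symm⟩)
  rng := Quot.lift (fun l => Quot.mk _ (S.rng l))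
    (fun a _ h => by
      obtain ⟨g, hg⟩ := h
      exact Quot.sound ⟨g, by rw [← hg]; exact (hact.2.2.2.1 g a).symm⟩)
  mul := Quot.lift
    (fun l => Quot.lift (qcMulFn S act l)
      (fun m m' h => by obtain ⟨k, hk⟩ := h; exact qcMulFn_right hact hfree l k hk))
    (fun l l' h => by
      obtain ⟨k, hk⟩ := h
      subst hk
      funext q
      induction q using Quot.ind with
      | _ m => exact qcMulFn_left hact hfree l k m)

theorem qcT_src (hact : IsCatAction S act) (hfree : FreeAction act) (l : D) :
    (qcT hact hfree).src (Quot.mk (orbRel act) l) = Quot.mk (orbRel act) (S.src l) := rfl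

theorem qcT_rng (hact : IsCatAction S act) (hfree : FreeAction act) (l : D) :
    (qcT hact hfree).rng (Quot.mk (orbRel act) l) = Quot.mk (orbRel act) (S.rng l) := rfl

theorem qcT_mul (hact : IsCatAction S act) (hfree : FreeAction act)
    {l m : D} {g : G} (hg : S.src l = S.rng (act g m)) :
    (qcT hact hfree).mul (Quot.mk (orbRel act) l) (Quot.mk (orbRel act) m) =
      Quot.mk (orbRel act) (S.mul l (act g m)) :=
  qcMulFn_eq hact hfree hg

theorem qcComp (hact : IsCatAction S act) (hfree : FreeAction act) {l m : D}
    (h : (qcT hact hfree).src (Quot.mk (orbRel act) l) =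
      (qcT hact hfree).rng (Quot.mk (orbRel act) m)) :
    ∃ g : G, S.src l = S.rng (act g m) := by
  obtain ⟨g, hg⟩ := qcExact hact h
  refine ⟨g⁻¹, ?_⟩
  rw [hact.2.2.2.1]
  exact (qcInv hact hg).symm

end QCaux

/-- the orbit space of a free action of a group by category
automorphisms is a well-defined small category, the quotient map is a functor,
and left cancellativity passes to the quotient. -/
theorem quotient_category_exists {D : Type u} {G : Type v} [Group G] (S : CatData D)
    (hC : S.IsCat) (act : G → D → D) (hact : IsCatAction S act)
    (hfree : FreeAction act) :
    ∃ T : CatData (Quot (orbRel act)),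
      T.IsCat ∧
      (∀ l : D, T.src (Quot.mk (orbRel act) l) = Quot.mk (orbRel act) (S.src l)) ∧
      (∀ l : D, T.rng (Quot.mk (orbRel act) l) = Quot.mk (orbRel act) (S.rng l)) ∧
      (∀ q : Quot (orbRel act), T.IsVertex q ↔
        ∃ v : D, S.IsVertex v ∧ Quot.mk (orbRel act) v = q) ∧
      (∀ (l m : D) (g : G), S.src l = S.rng (act g m) →
        T.mul (Quot.mk (orbRel act) l) (Quot.mk (orbRel act) m) =
          Quot.mk (orbRel act) (S.mul l (act g m))) ∧
      (∀ l m : D, S.src l = S.rng m →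
        T.src (Quot.mk (orbRel act) l) = T.rng (Quot.mk (orbRel act) m) ∧
        T.mul (Quot.mk (orbRel act) l) (Quot.mk (orbRel act) m) =
          Quot.mk (orbRel act) (S.mul l m)) ∧
      (S.LeftCancellative → T.LeftCancellative) := by
  refine ⟨qcT hact hfree, ?_, qcT_src hact hfree, qcT_rng hact hfree, ?_, ?_, ?_, ?_⟩
  · constructor
    · intro a
      induction a using Quot.ind with
      | _ l => rw [qcT_src hact hfree, qcT_src hact hfree, hC.src_src]
    · intro a
      induction a using Quot.ind with
      | _ l => rw [qcT_src hact hfree, qcT_rng hact hfree, hC.rng_src]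
    · intro a
      induction a using Quot.ind with
      | _ l => rw [qcT_rng hact hfree, qcT_src hact hfree, hC.src_rng]
    · intro a
      induction a using Quot.ind with
      | _ l => rw [qcT_rng hact hfree, qcT_rng hact hfree, hC.rng_rng]
    · -- rng_mul
      intro a b hab
      induction a using Quot.ind with | _ l => ?_
      induction b using Quot.ind with | _ m => ?_
      obtain ⟨g, hg⟩ := qcComp hact hfree hab
      rw [qcT_mul hact hfree hg, qcT_rng, qcT_rng]
      exact congrArg (Quot.mk _) (hC.rng_mul _ _ hg)
    · -- src_mul
      intro a b hab
      induction a using Quot.ind with | _ l => ?_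
      induction b using Quot.ind with | _ m => ?_
      obtain ⟨g, hg⟩ := qcComp hact hfree hab
      rw [qcT_mul hact hfree hg, qcT_src, qcT_src, hC.src_mul _ _ hg, hact.2.2.1]
      exact (Quot.sound ⟨g, rfl⟩).symm
    · -- assoc
      intro a b c hab hbc
      induction a using Quot.ind with | _ l => ?_
      induction b using Quot.ind with | _ m => ?_
      induction c using Quot.ind with | _ n => ?_
      obtain ⟨g, hg⟩ := qcComp hact hfree hab
      obtain ⟨h, hh⟩ := qcComp hact hfree hbc
      have hbc' : (qcT hact hfree).mul (Quot.mk _ m) (Quot.mk _ n) =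
          Quot.mk (orbRel act) (S.mul m (act h n)) := qcT_mul hact hfree hh
      have hab' : (qcT hact hfree).mul (Quot.mk _ l) (Quot.mk _ m) =
          Quot.mk (orbRel act) (S.mul l (act g m)) := qcT_mul hact hfree hg
      have hsm : S.src (act g m) = S.rng (act (g * h) n) := by
        rw [hact.2.2.1, hh, hact.2.2.2.1, hact.2.2.2.1, hact.2.1]
      have hg3 : S.src (S.mul l (act g m)) = S.rng (act (g * h) n) := by
        rw [hC.src_mul _ _ hg]; exact hsm
      have hg2 : S.src l = S.rng (act g (S.mul m (act h n))) := by
        rw [hact.2.2.2.1, hC.rng_mul _ _ hh, ← hact.2.2.2.1]; exact hg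
      rw [hab', hbc', qcT_mul hact hfree hg3, qcT_mul hact hfree hg2,
        hC.mul_assoc' _ _ _ hg hsm, ← hact.2.2.2.2 g m (act h n) hh, hact.2.1]
    · -- id_mul
      intro a
      induction a using Quot.ind with
      | _ l =>
        have hg : S.src (S.rng l) = S.rng (act 1 l) := by
          rw [hC.src_rng, hact.1]
        rw [qcT_rng, qcT_mul hact hfree hg, hact.1, hC.id_mul]
    · -- mul_id
      intro a
      induction a using Quot.ind with
      | _ l =>
        have hg : S.src l = S.rng (act 1 (S.src l)) := by
          rw [hact.1, hC.rng_src]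
        rw [qcT_src, qcT_mul hact hfree hg, hact.1, hC.mul_id]
  · -- vertex characterization
    intro q
    induction q using Quot.ind with
    | _ l =>
      constructor
      · intro hv
        obtain ⟨g, hg⟩ := qcExact hact hv
        refine ⟨S.src l, hC.src_src l, ?_⟩
        exact Quot.sound ⟨g, hg⟩
      · rintro ⟨v, hv, hq⟩
        obtain ⟨g, hg⟩ := qcExact hact hq
        show Quot.mk (orbRel act) (S.src l) = Quot.mk (orbRel act) l
        have : S.src l = l := by
          rw [← hg, hact.2.2.1, hv]
        rw [this]
  · -- mul formula
    intro l m g hg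
    exact qcT_mul hact hfree hg
  · -- functoriality on composable pairs
    intro l m hlm
    have hg : S.src l = S.rng (act 1 m) := by rw [hact.1]; exact hlm
    refine ⟨?_, ?_⟩
    · rw [qcT_src, qcT_rng, hlm]
    · rw [qcT_mul hact hfree hg, hact.1]
  · -- left cancellativity
    intro hcan a b c hab hac habc
    induction a using Quot.ind with | _ l => ?_
    induction b using Quot.ind with | _ m => ?_
    induction c using Quot.ind with | _ n => ?_
    obtain ⟨g, hg⟩ := qcComp hact hfree hab
    obtain ⟨h, hh⟩ := qcComp hact hfree hac
    rw [qcT_mul hact hfree hg, qcT_mul hact hfree hh] at habc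
    obtain ⟨k, hk⟩ := qcExact hact habc
    have hk1 : k = 1 := by
      apply hfree k (S.rng l)
      have e1 : S.rng (act k (S.mul l (act g m))) = S.rng (S.mul l (act h n)) := by
        rw [hk]
      rw [hact.2.2.2.1, hC.rng_mul _ _ hg, hC.rng_mul _ _ hh] at e1
      exact e1
    rw [hk1, hact.1] at hk
    have hmn : act g m = act h n := hcan l _ _ hg hh hk
    refine Quot.sound ⟨h⁻¹ * g, ?_⟩
    rw [← hact.2.1, hmn, hact.2.1, inv_mul_cancel, hact.1]
end

section
/- Let D be a left cancellative small category, G ↷ D a free action of a group G by category automorphisms, and q : D → D/G the quotient map. For [λ], [μ] ∈ D/G: the intersection [λ](D/G) ∩ [μ](D/G) is nonempty if and only if there exists k ∈ G with λD ∩ (k·μ)D ≠ ∅, in which case [λ](D/G) ∩ [μ](D/G) = ∪_{t∈G} q(λD ∩ (t·μ)D). -/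
universe u v w

/-- description of `[λ](D/G) ∩ [μ](D/G)` in the quotient of a free
action. -/
theorem quotient_rIdeal_inter {D : Type u} {G : Type v} [Group G] (S : CatData D)
    (hC : S.IsCat) (hLC : S.LeftCancellative)
    (act : G → D → D) (hact : IsCatAction S act) (hfree : FreeAction act)
    (T : CatData (Quot (orbRel act))) (hTcat : T.IsCat)
    (hTsrc : ∀ l : D, T.src (Quot.mk (orbRel act) l) = Quot.mk (orbRel act) (S.src l))
    (hTrng : ∀ l : D, T.rng (Quot.mk (orbRel act) l) = Quot.mk (orbRel act) (S.rng l))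
    (hTmul : ∀ (l m : D) (g : G), S.src l = S.rng (act g m) →
      T.mul (Quot.mk (orbRel act) l) (Quot.mk (orbRel act) m) =
        Quot.mk (orbRel act) (S.mul l (act g m)))
    (l m : D) :
    ((T.rIdeal (Quot.mk (orbRel act) l) ∩ T.rIdeal (Quot.mk (orbRel act) m)).Nonempty ↔
      ∃ k : G, (S.rIdeal l ∩ S.rIdeal (act k m)).Nonempty) ∧
    ((∃ k : G, (S.rIdeal l ∩ S.rIdeal (act k m)).Nonempty) →
      T.rIdeal (Quot.mk (orbRel act) l) ∩ T.rIdeal (Quot.mk (orbRel act) m) =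
        ⋃ t : G, Quot.mk (orbRel act) '' (S.rIdeal l ∩ S.rIdeal (act t m))) := by
  obtain ⟨h1, h2, hsrc, hrng, hmulact⟩ := hact
  set q : D → Quot (orbRel act) := Quot.mk (orbRel act) with hq
  -- quotient equality gives orbit relatedness
  have hrel : ∀ a b : D, q a = q b → ∃ g : G, act g a = b := by
    have key : ∀ a b : D, Relation.EqvGen (orbRel act) a b → ∃ g : G, act g a = b := by
      intro a b h
      induction h with
      | rel x y h => exact h
      | refl x => exact ⟨1, h1 x⟩
      | symm x y _ ih =>
          obtain ⟨g, hg⟩ := ih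
          exact ⟨g⁻¹, by rw [← hg, h2, inv_mul_cancel, h1]⟩
      | trans x y z _ _ ih1 ih2 =>
          obtain ⟨g, hg⟩ := ih1; obtain ⟨g', hg'⟩ := ih2
          exact ⟨g' * g, by rw [← h2, hg, hg']⟩
    exact fun a b hab => key a b (Quot.eqvGen_exact hab)
  have hsound : ∀ (a b : D) (g : G), act g a = b → q a = q b := fun a b g hg =>
    Quot.sound ⟨g, hg⟩
  -- characterization of quotient right ideals
  have hL2 : ∀ (l : D) (x : Quot (orbRel act)),
      x ∈ T.rIdeal (q l) ↔ ∃ y ∈ S.rIdeal l, x = q y := by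
    intro l x
    constructor
    · rintro ⟨B, hB1, hB2⟩
      obtain ⟨b, rfl⟩ := Quot.exists_rep B
      rw [hTsrc, hTrng] at hB1
      obtain ⟨g, hg⟩ := hrel _ _ hB1
      have hsl : S.src l = S.rng (act g⁻¹ b) := by
        rw [hrng, ← hg, h2, inv_mul_cancel, h1]
      refine ⟨S.mul l (act g⁻¹ b), ⟨act g⁻¹ b, hsl, rfl⟩, ?_⟩
      rw [hB2]; exact hTmul l b g⁻¹ hsl
    · rintro ⟨y, ⟨b, hb1, rfl⟩, rfl⟩
      refine ⟨q b, ?_, ?_⟩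
      · rw [hTsrc, hTrng, hb1]
      · have : S.src l = S.rng (act 1 b) := by rw [h1]; exact hb1
        rw [hTmul l b 1 this, h1]
  -- rIdeal of a translate
  have hL3 : ∀ (m : D) (g : G) (y : D),
      y ∈ S.rIdeal (act g m) ↔ ∃ b ∈ S.rIdeal m, y = act g b := by
    intro m g y
    constructor
    · rintro ⟨c, hc1, rfl⟩
      have hc' : S.src m = S.rng (act g⁻¹ c) := by
        rw [hrng, ← hc1, hsrc]
        rw [h2, inv_mul_cancel, h1]
      refine ⟨S.mul m (act g⁻¹ c), ⟨act g⁻¹ c, hc', rfl⟩, ?_⟩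
      rw [← hmulact g m _ hc', h2, mul_inv_cancel, h1]
    · rintro ⟨b, ⟨c, hc1, rfl⟩, rfl⟩
      refine ⟨act g c, ?_, ?_⟩
      · rw [hsrc, hrng, hc1]
      · rw [hmulact g m c hc1]
  -- forward direction of the iff (and of the equality)
  have hfwd : ∀ x, x ∈ T.rIdeal (q l) ∩ T.rIdeal (q m) →
      ∃ (g : G) (y : D), y ∈ S.rIdeal l ∩ S.rIdeal (act g m) ∧ x = q y := by
    rintro x ⟨hx1, hx2⟩
    obtain ⟨y, hy, rfl⟩ := (hL2 l x).mp hx1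
    obtain ⟨z, hz, hqz⟩ := (hL2 m _).mp hx2
    obtain ⟨g, hg⟩ := hrel _ _ hqz.symm
    refine ⟨g, y, ⟨hy, ?_⟩, rfl⟩
    exact (hL3 m g y).mpr ⟨z, hz, hg.symm⟩
  -- backward: a point of rIdeal l ∩ rIdeal (act t m) maps into both quotient ideals
  have hbwd : ∀ (t : G) (y : D), y ∈ S.rIdeal l ∩ S.rIdeal (act t m) →
      q y ∈ T.rIdeal (q l) ∩ T.rIdeal (q m) := by
    rintro t y ⟨hy1, hy2⟩
    obtain ⟨b, hb, rfl⟩ := (hL3 m t y).mp hy2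
    refine ⟨(hL2 l _).mpr ⟨act t b, hy1, rfl⟩, (hL2 m _).mpr ⟨b, hb, ?_⟩⟩
    exact (hsound (act t b) b t⁻¹ (by rw [h2, inv_mul_cancel, h1])).symm ▸ rfl
  constructor
  · constructor
    · rintro ⟨x, hx⟩
      obtain ⟨g, y, hy, _⟩ := hfwd x hx
      exact ⟨g, y, hy⟩
    · rintro ⟨k, y, hy⟩
      exact ⟨q y, hbwd k y hy⟩
  · intro _
    ext x
    constructor
    · intro hx
      obtain ⟨g, y, hy, rfl⟩ := hfwd x hx
      exact Set.mem_iUnion.mpr ⟨g, y, hy, rfl⟩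
    · intro hx
      obtain ⟨t, y, hy, rfl⟩ := Set.mem_iUnion.mp hx
      exact hbwd t y hy
end

section
/- (Gross–Tucker theorem for small categories) Let D be a small category and G ↷ D a free action of a group G by category automorphisms. Then there exists a cocycle η : D/G → G and an isomorphism of small categories ρ : (D/G) ×_η G → D that is G-equivariant, where G acts on the skew product by g·(α,h) = (α, hg⁻¹); that is, ρ is a bijective functor with ρ(α, hg⁻¹) = g·ρ(α,h) for all (α,h) ∈ (D/G) ×_η G and g ∈ G. -/
universe u v w

/-- Gross–Tucker: a free action of `G` on a small category `D` is
equivariantly isomorphic to the skew product of the quotient `D/G` by some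
cocycle `η : D/G → G`, with `G` acting on the skew product by `g·(α,h) = (α,hg⁻¹)`. -/
theorem gross_tucker {D : Type u} {G : Type v} [Group G] (S : CatData D)
    (hC : S.IsCat) (act : G → D → D) (hact : IsCatAction S act) (hfree : FreeAction act)
    (T : CatData (Quot (orbRel act))) (hTcat : T.IsCat)
    (hTsrc : ∀ l : D, T.src (Quot.mk (orbRel act) l) = Quot.mk (orbRel act) (S.src l))
    (hTrng : ∀ l : D, T.rng (Quot.mk (orbRel act) l) = Quot.mk (orbRel act) (S.rng l))
    (hTmul : ∀ (l m : D) (g : G), S.src l = S.rng (act g m) →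
      T.mul (Quot.mk (orbRel act) l) (Quot.mk (orbRel act) m) =
        Quot.mk (orbRel act) (S.mul l (act g m))) :
    ∃ η : Quot (orbRel act) → G, T.IsCocycle η ∧
      ∃ ρ : Quot (orbRel act) × G → D,
        Function.Bijective ρ ∧
        (∀ p, S.src (ρ p) = ρ ((skewProduct T η).src p)) ∧
        (∀ p, S.rng (ρ p) = ρ ((skewProduct T η).rng p)) ∧
        (∀ p q, (skewProduct T η).src p = (skewProduct T η).rng q →
          S.mul (ρ p) (ρ q) = ρ ((skewProduct T η).mul p q)) ∧
        (∀ (p : Quot (orbRel act) × G) (g : G), ρ (p.1, p.2 * g⁻¹) = act g (ρ p)) := by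

  classical
  obtain ⟨h1, hmul_act, hsrc_act, hrng_act, hmulG⟩ := hact
  set q : D → Quot (orbRel act) := Quot.mk (orbRel act) with hqdef
  have free' : ∀ (g h : G) (a : D), act g a = act h a → g = h := by
    intro g h a hgh
    have h2 : act (h⁻¹ * g) a = a := by
      rw [← hmul_act, hgh, hmul_act, inv_mul_cancel, h1]
    have h3 := hfree _ _ h2
    rwa [inv_mul_eq_one, eq_comm] at h3
  have key : ∀ a b : D, q a = q b → ∃ g, act g a = b := by
    intro a b hab
    have h := Quot.eqvGen_exact hab
    clear hab
    induction h with
    | rel x y hxy => exact hxy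
    | refl x => exact ⟨1, h1 x⟩
    | symm x y _ ih =>
        obtain ⟨g, hg⟩ := ih
        exact ⟨g⁻¹, by rw [← hg, hmul_act, inv_mul_cancel, h1]⟩
    | trans x y z _ _ ih1 ih2 =>
        obtain ⟨g, hg⟩ := ih1
        obtain ⟨k, hk⟩ := ih2
        exact ⟨k * g, by rw [← hmul_act, hg, hk]⟩
  have hq_act : ∀ (g : G) (l : D), q (act g l) = q l := by
    intro g l
    exact (Quot.sound ⟨g, rfl⟩).symm
  set σ : Quot (orbRel act) → D := fun v => S.src (Quot.out v) with hσdef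
  have hqsrc : ∀ l : D, q (S.src l) = T.src (q l) := fun l => (hTsrc l).symm
  have hqrng : ∀ l : D, q (S.rng l) = T.rng (q l) := fun l => (hTrng l).symm
  have hqσ : ∀ v, q (σ v) = T.src v := by
    intro v
    show q (S.src (Quot.out v)) = T.src v
    rw [hqsrc]
    exact congrArg T.src (Quot.out_eq v)
  have hvsrc : ∀ α, T.src (T.src α) = T.src α := hTcat.src_src
  have hvrng : ∀ α, T.src (T.rng α) = T.rng α := hTcat.src_rng
  have hlamex : ∀ α, ∃ l : D, q l = α ∧ S.src l = σ (T.src α) := by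
    intro α
    have hm : q (Quot.out α) = α := Quot.out_eq α
    have h2 : q (S.src (Quot.out α)) = q (σ (T.src α)) := by
      rw [hqsrc, hm, hqσ, hvsrc]
    obtain ⟨g, hg⟩ := key _ _ h2
    exact ⟨act g (Quot.out α), by rw [hq_act, hm], by rw [hsrc_act, hg]⟩
  choose lam hlamq hlams using hlamex
  have lam_unique : ∀ α l, q l = α → S.src l = σ (T.src α) → l = lam α := by
    intro α l hl hsl
    obtain ⟨g, hg⟩ := key l (lam α) (by rw [hl, hlamq])
    have h2 : act g (σ (T.src α)) = σ (T.src α) := by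
      rw [← hsl, ← hsrc_act, hg, hlams, hsl]
    have hg1 := hfree _ _ h2
    rw [hg1, h1] at hg
    exact hg
  have hηex : ∀ α, ∃ g : G, act g (S.rng (lam α)) = σ (T.rng α) := by
    intro α
    apply key
    rw [hqrng, hlamq, hqσ, hvrng]
  choose η hη using hηex
  have hlamv : ∀ v, T.src v = v → lam v = σ v := by
    intro v hv
    refine (lam_unique v (σ v) (by rw [hqσ, hv]) ?_).symm
    show S.src (S.src (Quot.out v)) = σ (T.src v)
    rw [hC.src_src, hv]
  have hcompose : ∀ α β, T.src α = T.rng β →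
      S.src (act (η β)⁻¹ (lam α)) = S.rng (lam β) := by
    intro α β hαβ
    rw [hsrc_act, hlams, hαβ, ← hη β, hmul_act, inv_mul_cancel, h1]
  have lam_mul : ∀ α β, T.src α = T.rng β →
      lam (T.mul α β) = S.mul (act (η β)⁻¹ (lam α)) (lam β) := by
    intro α β hαβ
    refine (lam_unique _ _ ?_ ?_).symm
    · have h2 : S.src (act (η β)⁻¹ (lam α)) = S.rng (act (1:G) (lam β)) := by
        rw [h1]; exact hcompose α β hαβ
      have h3 := hTmul (act (η β)⁻¹ (lam α)) (lam β) 1 h2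
      rw [h1] at h3
      rw [← h3, hq_act, hlamq, hlamq]
    · rw [hC.src_mul _ _ (hcompose α β hαβ), hlams, hTcat.src_mul α β hαβ]
  have hcocycle : T.IsCocycle η := by
    intro α β hαβ
    apply free' _ _ (S.rng (lam (T.mul α β)))
    rw [hη, hTcat.rng_mul α β hαβ, lam_mul α β hαβ,
      hC.rng_mul _ _ (hcompose α β hαβ), hrng_act, hmul_act,
      mul_inv_cancel_right, hη]
  refine ⟨η, hcocycle, fun p => act p.2⁻¹ (lam p.1), ⟨?_, ?_⟩, ?_, ?_, ?_, ?_⟩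
  · rintro ⟨α, g⟩ ⟨β, h⟩ hab
    simp only at hab
    have hαβ : α = β := by
      have h2 := congrArg q hab
      rwa [hq_act, hq_act, hlamq, hlamq] at h2
    subst hαβ
    have h3 := free' _ _ _ hab
    rw [Prod.mk.injEq]
    exact ⟨rfl, inv_injective h3⟩
  · intro l
    obtain ⟨g, hg⟩ := key (lam (q l)) l (by rw [hlamq])
    refine ⟨(q l, g⁻¹), ?_⟩
    show act g⁻¹⁻¹ (lam (q l)) = l
    rw [inv_inv, hg]
  · intro p
    show S.src (act p.2⁻¹ (lam p.1)) = act p.2⁻¹ (lam (T.src p.1))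
    rw [hsrc_act, hlams, hlamv _ (hvsrc p.1)]
  · intro p
    show S.rng (act p.2⁻¹ (lam p.1)) = act (η p.1 * p.2)⁻¹ (lam (T.rng p.1))
    rw [hrng_act, hlamv _ (hvrng p.1), ← hη p.1, hmul_act, mul_inv_rev,
      inv_mul_cancel_right]
  · rintro ⟨α, g⟩ ⟨β, h⟩ hpq
    have e1 : T.src α = T.rng β := congrArg Prod.fst hpq
    have e2 : g = η β * h := congrArg Prod.snd hpq
    show S.mul (act g⁻¹ (lam α)) (act h⁻¹ (lam β)) = act h⁻¹ (lam (T.mul α β))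
    rw [e2, mul_inv_rev, ← hmul_act, hmulG _ _ _ (hcompose α β e1), lam_mul α β e1]
  · intro p g
    show act (p.2 * g⁻¹)⁻¹ (lam p.1) = act g (act p.2⁻¹ (lam p.1))
    rw [hmul_act, mul_inv_rev, inv_inv]
end

section
/- Let D be a left cancellative small category and G ↷ D a free action of a group G by category automorphisms. If the quotient category D/G is finitely aligned, then D is finitely aligned. -/
universe u v w

section AuxFA
variable {C : Type*} (S : CatData C)

lemma aux_mem_rIdeal_self (hC : S.IsCat) (a : C) : a ∈ S.rIdeal a :=
  ⟨S.src a, (hC.rng_src a).symm, (hC.mul_id a).symm⟩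

lemma aux_rng_eq_of_mem (hC : S.IsCat) {x a : C} (hx : x ∈ S.rIdeal a) :
    S.rng x = S.rng a := by
  obtain ⟨m, hm, rfl⟩ := hx
  exact hC.rng_mul a m hm

lemma aux_rIdeal_trans (hC : S.IsCat) {c a x : C} (hc : c ∈ S.rIdeal a)
    (hx : x ∈ S.rIdeal c) : x ∈ S.rIdeal a := by
  obtain ⟨m, hm, rfl⟩ := hc
  obtain ⟨q, hq, rfl⟩ := hx
  have hq' : S.src m = S.rng q := by rw [← hC.src_mul a m hm]; exact hq
  refine ⟨S.mul m q, ?_, ?_⟩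
  · rw [hC.rng_mul m q hq']; exact hm
  · exact hC.mul_assoc' a m q hm hq'

end AuxFA

/-- if the quotient of an LCSC by a free action is finitely
aligned, then so is the LCSC itself. -/


theorem finitelyAligned_of_quotient {D : Type u} {G : Type v} [Group G] (S : CatData D)
    (hC : S.IsCat) (hLC : S.LeftCancellative)
    (act : G → D → D) (hact : IsCatAction S act) (hfree : FreeAction act)
    (T : CatData (Quot (orbRel act))) (hTcat : T.IsCat)
    (hTsrc : ∀ l : D, T.src (Quot.mk (orbRel act) l) = Quot.mk (orbRel act) (S.src l))
    (hTrng : ∀ l : D, T.rng (Quot.mk (orbRel act) l) = Quot.mk (orbRel act) (S.rng l))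
    (hTmul : ∀ (l m : D) (g : G), S.src l = S.rng (act g m) →
      T.mul (Quot.mk (orbRel act) l) (Quot.mk (orbRel act) m) =
        Quot.mk (orbRel act) (S.mul l (act g m)))
    (hTFA : T.FinitelyAligned) :
    S.FinitelyAligned := by

  obtain ⟨h1, h2, hsrcA, hrngA, hmulA⟩ := hact
  have hequiv : Equivalence (orbRel act) := by
    constructor
    · exact fun x => ⟨1, h1 x⟩
    · rintro x y ⟨g, rfl⟩
      exact ⟨g⁻¹, by rw [h2, inv_mul_cancel, h1]⟩
    · rintro x y z ⟨g, rfl⟩ ⟨k, rfl⟩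
      exact ⟨k * g, (h2 k g x).symm⟩
  have hqeq : ∀ x y : D, Quot.mk (orbRel act) x = Quot.mk (orbRel act) y ↔
      ∃ g, act g x = y := by
    intro x y
    rw [Quot.eq, hequiv.eqvGen_iff]
    rfl
  -- lifting ideals to the quotient
  have hlift : ∀ x a : D, x ∈ S.rIdeal a →
      Quot.mk (orbRel act) x ∈ T.rIdeal (Quot.mk (orbRel act) a) := by
    rintro x a ⟨m, hm, rfl⟩
    refine ⟨Quot.mk _ m, ?_, ?_⟩
    · rw [hTsrc, hTrng, hm]
    · rw [hTmul a m 1 (by rwa [h1]), h1]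
  -- extracting memberships from the quotient
  have hextract : ∀ x a : D, Quot.mk (orbRel act) x ∈ T.rIdeal (Quot.mk (orbRel act) a) →
      ∃ k, x ∈ S.rIdeal (act k a) := by
    intro x a hx
    obtain ⟨b', hb1, hb2⟩ := hx
    obtain ⟨p, rfl⟩ := Quot.exists_rep b'
    rw [hTsrc, hTrng] at hb1
    obtain ⟨g, hg⟩ := (hqeq _ _).mp hb1
    have hcond : S.src a = S.rng (act g⁻¹ p) := by
      rw [hrngA, ← hg, h2, inv_mul_cancel, h1]
    rw [hTmul a p g⁻¹ hcond] at hb2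
    obtain ⟨k, hk⟩ := (hqeq _ _).mp hb2.symm
    refine ⟨k, act k (act g⁻¹ p), ?_, ?_⟩
    · rw [hsrcA, hrngA, hrngA, hcond, hrngA]
    · rw [hmulA k a _ hcond, hk]
  -- uniqueness of the representative in a given ideal
  have huniq : ∀ (a c c' : D), c ∈ S.rIdeal a → c' ∈ S.rIdeal a →
      Quot.mk (orbRel act) c = Quot.mk (orbRel act) c' → c = c' := by
    intro a c c' hc hc' heq
    obtain ⟨m, hm⟩ := (hqeq _ _).mp heq
    have hr : act m (S.rng a) = S.rng a := by
      calc act m (S.rng a) = act m (S.rng c) := by rw [aux_rng_eq_of_mem S hC hc]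
        _ = S.rng (act m c) := (hrngA m c).symm
        _ = S.rng c' := by rw [hm]
        _ = S.rng a := aux_rng_eq_of_mem S hC hc'
    have := hfree m _ hr
    subst this
    rw [h1] at hm
    exact hm
  intro a b
  classical
  by_cases hne : (S.rIdeal a ∩ S.rIdeal b).Nonempty
  · obtain ⟨x₀, hx₀a, hx₀b⟩ := hne
    obtain ⟨F, hF⟩ := hTFA (Quot.mk _ a) (Quot.mk _ b)
    set f : Quot (orbRel act) → D := fun q =>
      if h : ∃ c, Quot.mk (orbRel act) c = q ∧ c ∈ S.rIdeal a ∧ c ∈ S.rIdeal b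
      then h.choose else x₀ with hfdef
    refine ⟨F.image f, ?_⟩
    apply Set.Subset.antisymm
    · rintro x ⟨hxa, hxb⟩
      have hq : Quot.mk (orbRel act) x ∈
          ⋃ γ ∈ F, T.rIdeal γ := by
        rw [← hF]; exact ⟨hlift _ _ hxa, hlift _ _ hxb⟩
      simp only [Set.mem_iUnion, exists_prop] at hq
      obtain ⟨γ, hγF, hγ⟩ := hq
      obtain ⟨c₀, rfl⟩ := Quot.exists_rep γ
      obtain ⟨h, hxc⟩ := hextract x c₀ hγ
      set c := act h c₀ with hcdef
      have hcγ : Quot.mk (orbRel act) c = Quot.mk (orbRel act) c₀ :=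
        Quot.sound ⟨h⁻¹, by rw [hcdef, h2, inv_mul_cancel, h1]⟩
      have hcmem : Quot.mk (orbRel act) c ∈
          T.rIdeal (Quot.mk (orbRel act) a) ∩ T.rIdeal (Quot.mk (orbRel act) b) := by
        rw [hcγ, hF]
        exact Set.mem_biUnion hγF (aux_mem_rIdeal_self T hTcat _)
      have key : ∀ y : D, S.rng x = S.rng y →
          Quot.mk (orbRel act) c ∈ T.rIdeal (Quot.mk (orbRel act) y) →
          c ∈ S.rIdeal y := by
        intro y hry hmem
        obtain ⟨k, hk⟩ := hextract c y hmem
        have hr : act k (S.rng y) = S.rng y := by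
          rw [← hrngA, ← aux_rng_eq_of_mem S hC hk, ← aux_rng_eq_of_mem S hC hxc]
          exact hry
        have := hfree k _ hr
        subst this
        rwa [h1] at hk
      have hca : c ∈ S.rIdeal a := key a (aux_rng_eq_of_mem S hC hxa) hcmem.1
      have hcb : c ∈ S.rIdeal b := key b (aux_rng_eq_of_mem S hC hxb) hcmem.2
      have hex : ∃ c', Quot.mk (orbRel act) c' = Quot.mk (orbRel act) c₀ ∧
          c' ∈ S.rIdeal a ∧ c' ∈ S.rIdeal b := ⟨c, hcγ, hca, hcb⟩
      have hfc : f (Quot.mk (orbRel act) c₀) = c := by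
        rw [hfdef]
        simp only [dif_pos hex]
        exact huniq a _ _ hex.choose_spec.2.1 hca
          (hex.choose_spec.1.trans hcγ.symm)
      refine Set.mem_biUnion (Finset.mem_image_of_mem f hγF) ?_
      rw [hfc]
      exact hxc
    · intro x hx
      simp only [Set.mem_iUnion, exists_prop, Finset.mem_image] at hx
      obtain ⟨c, ⟨γ, hγF, rfl⟩, hxc⟩ := hx
      have hfγ : f γ ∈ S.rIdeal a ∩ S.rIdeal b := by
        rw [hfdef]
        by_cases hh : ∃ c', Quot.mk (orbRel act) c' = γ ∧
            c' ∈ S.rIdeal a ∧ c' ∈ S.rIdeal b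
        · simp only [dif_pos hh]
          exact ⟨hh.choose_spec.2.1, hh.choose_spec.2.2⟩
        · simp only [dif_neg hh]
          exact ⟨hx₀a, hx₀b⟩
      exact ⟨aux_rIdeal_trans S hC hfγ.1 hxc, aux_rIdeal_trans S hC hfγ.2 hxc⟩
  · refine ⟨∅, ?_⟩
    rw [Set.not_nonempty_iff_eq_empty.mp hne]
    simp
end

section
/- Let G be a connected groupoid, fix x ∈ G⁰, and let T = {t_y}_{y∈G⁰} be a maximal tree in G rooted at x (so t_y ∈ yGx for each y and t_x = x). Let H = G_x = xGx be the isotropy group at x and S = G⁰ \ {x}. Define j : G → 𝔽(S) * H (the free product of the free group on S with H) by j(a) = z̄ · ι(t_z⁻¹ a t_y) · ȳ⁻¹ for a ∈ zGy, where z̄ (resp. ȳ) is the image in 𝔽(S)*H of the free generator z (resp. y) when z ∈ S (resp. y ∈ S) and is the identity when z = x (resp. y = x), and ι : H → 𝔽(S)*H is the canonical inclusion. Then (𝔽(S)*H, j) is a universal group of G. -/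
universe u v w

/-- for a connected groupoid `S` with vertex `x`, maximal tree
`{t_y}` rooted at `x`, and isotropy group `H ≅ xSx` (given by the identification
`ε`), the map `j(a) = z̄ (t_z⁻¹ a t_y) ȳ⁻¹` makes `𝔽(S⁰ \ {x}) ∗ H` a universal
group of `S`. -/
theorem universal_group_of_connected_groupoid {C : Type u} {H : Type v} [Group H]
    (S : CatData C) (hG : IsGroupoid S)
    (hconn : ∀ vv ww, S.IsVertex vv → S.IsVertex ww → ∃ a, S.src a = vv ∧ S.rng a = ww)
    (x : C) (hx : S.IsVertex x)
    (t tinv : C → C) (htree : IsMaxTree S x t tinv)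
    (ε : H → C)
    (hε1 : Function.Injective ε)
    (hε2 : ∀ h, S.src (ε h) = x ∧ S.rng (ε h) = x)
    (hε3 : ∀ a, S.src a = x → S.rng a = x → ∃ h, ε h = a)
    (hε4 : ∀ h k, ε (h * k) = S.mul (ε h) (ε k)) :
    ∃ j : C → Monoid.Coprod (FreeGroup {y : C // S.IsVertex y ∧ y ≠ x}) H,
      (∀ (a : C) (h : H), ε h = S.mul (S.mul (tinv (S.rng a)) a) (t (S.src a)) →
        j a = vbar S x H (S.rng a) * Monoid.Coprod.inr h * (vbar S x H (S.src a))⁻¹) ∧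
      IsUniversalGroup S (Monoid.Coprod (FreeGroup {y : C // S.IsVertex y ∧ y ≠ x}) H) j := by
  classical
  obtain ⟨hc, hinv⟩ := hG
  obtain ⟨htx, htix, htv⟩ := htree
  have hra : ∀ a, S.IsVertex (S.rng a) := fun a => hc.src_rng a
  have hsa : ∀ a, S.IsVertex (S.src a) := fun a => hc.src_src a
  have hrx : S.rng x = x := by have := hc.rng_src x; rwa [hx] at this
  have hts : ∀ v, S.IsVertex v → S.src (t v) = x := fun v hv => (htv v hv).1
  have htr : ∀ v, S.IsVertex v → S.rng (t v) = v := fun v hv => (htv v hv).2.1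
  have htis : ∀ v, S.IsVertex v → S.src (tinv v) = v := fun v hv => (htv v hv).2.2.1
  have htir : ∀ v, S.IsVertex v → S.rng (tinv v) = x := fun v hv => (htv v hv).2.2.2.1
  have htit : ∀ v, S.IsVertex v → S.mul (tinv v) (t v) = x := fun v hv => (htv v hv).2.2.2.2.1
  have htti : ∀ v, S.IsVertex v → S.mul (t v) (tinv v) = v := fun v hv => (htv v hv).2.2.2.2.2
  set E : C → C := fun a => S.mul (S.mul (tinv (S.rng a)) a) (t (S.src a)) with hE
  have hcomp1 : ∀ a, S.src (tinv (S.rng a)) = S.rng a := fun a => htis _ (hra a)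
  have hm1s : ∀ a, S.src (S.mul (tinv (S.rng a)) a) = S.src a := fun a =>
    hc.src_mul _ _ (hcomp1 a)
  have hm1r : ∀ a, S.rng (S.mul (tinv (S.rng a)) a) = x := fun a => by
    rw [hc.rng_mul _ _ (hcomp1 a), htir _ (hra a)]
  have hcomp2 : ∀ a, S.src (S.mul (tinv (S.rng a)) a) = S.rng (t (S.src a)) := fun a => by
    rw [hm1s a, htr _ (hsa a)]
  have hEs : ∀ a, S.src (E a) = x := fun a => by
    simp only [hE]; rw [hc.src_mul _ _ (hcomp2 a), hts _ (hsa a)]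
  have hEr : ∀ a, S.rng (E a) = x := fun a => by
    simp only [hE]; rw [hc.rng_mul _ _ (hcomp2 a), hm1r a]
  choose hh hhε using fun a => hε3 (E a) (hEs a) (hEr a)
  -- ε 1 = x
  have hε1x : ε 1 = x := by
    have hidem : S.mul (ε 1) (ε 1) = ε 1 := by
      have := hε4 1 1; rw [one_mul] at this; exact this.symm
    obtain ⟨b, hbs, hbr, hab, hba⟩ := hinv (ε 1)
    have h1 : S.mul (S.mul b (ε 1)) (ε 1) = S.mul b (ε 1) := by
      rw [hc.mul_assoc' b (ε 1) (ε 1) (by rw [hbs])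
        (by rw [(hε2 1).1, (hε2 1).2]), hidem]
    rw [hba] at h1
    have h2 : S.mul (S.src (ε 1)) (ε 1) = ε 1 := by
      have hsr : S.src (ε 1) = S.rng (ε 1) := by rw [(hε2 1).1, (hε2 1).2]
      rw [hsr, hc.id_mul]
    rw [h2] at h1
    rw [h1, (hε2 1).1]
  -- multiplicativity of E
  have hEmul : ∀ a b, S.src a = S.rng b → E (S.mul a b) = S.mul (E a) (E b) := by
    intro a b hab
    have hsab : S.src (S.mul a b) = S.src b := hc.src_mul a b hab
    have hrab : S.rng (S.mul a b) = S.rng a := hc.rng_mul a b hab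
    have hvu : S.IsVertex (S.src a) := hsa a
    have step1 : S.mul (E a) (E b) =
        S.mul (S.mul (tinv (S.rng a)) a) (S.mul (t (S.src a)) (E b)) := by
      conv_lhs => rw [hE]
      simp only []
      rw [hc.mul_assoc' _ _ _ (by rw [hm1s a, htr _ hvu]) (by rw [hts _ hvu, hEr b])]
    have step2 : S.mul (t (S.src a)) (E b) = S.mul b (t (S.src b)) := by
      simp only [hE]
      rw [← hc.mul_assoc' (t (S.src a)) _ (t (S.src b)) (by rw [hts _ hvu, hm1r b])
        (by rw [hm1s b, htr _ (hsa b)])]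
      rw [← hc.mul_assoc' (t (S.src a)) (tinv (S.rng b)) b
        (by rw [hts _ hvu, htir _ (hra b)]) (hcomp1 b)]
      rw [← hab, htti _ hvu, hab, hc.id_mul]
    rw [step1, step2]
    rw [← hc.mul_assoc' _ b (t (S.src b)) (by rw [hm1s a, hab]) (by rw [htr _ (hsa b)])]
    rw [hc.mul_assoc' (tinv (S.rng a)) a b (hcomp1 a) hab]
    simp only [hE]
    rw [hsab, hrab]
  have hhmul : ∀ a b, S.src a = S.rng b → hh (S.mul a b) = hh a * hh b := by
    intro a b hab
    apply hε1
    rw [hhε, hε4, hhε, hhε, hEmul a b hab]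
  -- the cocycle j
  set j : C → Monoid.Coprod (FreeGroup {y : C // S.IsVertex y ∧ y ≠ x}) H :=
    fun a => vbar S x H (S.rng a) * Monoid.Coprod.inr (hh a) * (vbar S x H (S.src a))⁻¹
    with hj
  have hvbarx : vbar S x H x = 1 := by
    rw [vbar]; simp
  refine ⟨j, ?_, ?_, ?_⟩
  · intro a h hha
    have : h = hh a := hε1 (by rw [hhε a, hE]; exact hha)
    rw [this]
  · -- j is a cocycle
    intro a b hab
    have hsab : S.src (S.mul a b) = S.src b := hc.src_mul a b hab
    have hrab : S.rng (S.mul a b) = S.rng a := hc.rng_mul a b hab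
    simp only [hj]
    rw [hsab, hrab, hhmul a b hab, hab, map_mul]
    group
  · -- universality
    intro K instK ψ hψ
    have hψx : ψ x = 1 := by
      have hmulxx : S.mul x x = x := by
        have := hc.mul_id x; rwa [hx] at this
      have := hψ x x (by rw [hx, hrx])
      rw [hmulxx] at this
      exact left_eq_mul.mp this
    have hψti : ∀ v, S.IsVertex v → ψ (tinv v) = (ψ (t v))⁻¹ := by
      intro v hv
      have := hψ (tinv v) (t v) (by rw [htis _ hv, htr _ hv])
      rw [htit _ hv, hψx] at this
      exact eq_inv_of_mul_eq_one_left this.symm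
    set φH : H →* K := MonoidHom.mk' (fun h => ψ (ε h)) (by
      intro h k
      show ψ (ε (h * k)) = ψ (ε h) * ψ (ε k)
      rw [hε4, hψ (ε h) (ε k) (by rw [(hε2 h).1, (hε2 k).2])]) with hφH
    set φF : FreeGroup {y : C // S.IsVertex y ∧ y ≠ x} →* K :=
      FreeGroup.lift (fun y => ψ (t y.1)) with hφF
    set ψ' := Monoid.Coprod.lift φF φH with hψ'
    have hψ'vbar : ∀ z, S.IsVertex z → ψ' (vbar S x H z) = ψ (t z) := by
      intro z hz
      by_cases hzx : z = x
      · subst hzx; rw [hvbarx, map_one, htx, hψx]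
      · rw [vbar]
        rw [dif_pos ⟨hz, hzx⟩]
        simp [hψ', hφF]
    have hψ'j : ∀ a, ψ a = ψ' (j a) := by
      intro a
      simp only [hj]
      rw [map_mul, map_mul, map_inv, hψ'vbar _ (hra a), hψ'vbar _ (hsa a)]
      have hmid : ψ' (Monoid.Coprod.inr (hh a)) = ψ (ε (hh a)) := by
        simp [hψ', hφH]
      rw [hmid, hhε a]
      simp only [hE]
      rw [hψ _ _ (hcomp2 a), hψ _ _ (hcomp1 a), hψti _ (hra a)]
      group
    refine ⟨ψ', hψ'j, ?_⟩
    intro ψ'' hψ''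
    apply Monoid.Coprod.hom_ext
    · apply FreeGroup.ext_hom
      intro y
      obtain ⟨z, hz, hzx⟩ := y
      have hjz : j (t z) = Monoid.Coprod.inl (FreeGroup.of (⟨z, hz, hzx⟩ :
          {y : C // S.IsVertex y ∧ y ≠ x})) := by
        have hhz : hh (t z) = 1 := by
          apply hε1
          rw [hhε, hε1x]
          simp only [hE]
          rw [htr _ hz, hts _ hz, htx, htit _ hz]
          have := hc.mul_id x; rwa [hx] at this
        simp only [hj]
        rw [hhz, htr _ hz, hts _ hz, hvbarx, map_one, mul_one, inv_one, mul_one]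
        rw [vbar, dif_pos ⟨hz, hzx⟩]
      simp only [MonoidHom.comp_apply]
      rw [← hjz, ← hψ'' (t z), ← hψ'j (t z)]
    · ext h
      have hjh : j (ε h) = Monoid.Coprod.inr h := by
        have hhh : hh (ε h) = h := by
          apply hε1
          rw [hhε]
          simp only [hE]
          rw [(hε2 h).1, (hε2 h).2, htx, htix]
          have h1 : S.mul x (ε h) = ε h := by
            have := hc.id_mul (ε h); rwa [(hε2 h).2] at this
          have h2 : S.mul (ε h) x = ε h := by
            have := hc.mul_id (ε h); rwa [(hε2 h).1] at this
          rw [h1, h2]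
        simp only [hj]
        rw [hhh, (hε2 h).1, (hε2 h).2, hvbarx, one_mul, inv_one, mul_one]
      simp only [MonoidHom.comp_apply]
      rw [← hjh, ← hψ'' (ε h), ← hψ'j (ε h)]
end
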